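/- For every positive integer n, the average first moment P_n(t) of the truncated cube is a strictly increasing function of t on (0, n); in particular, for every α ∈ (0, 1/2) the equation P_n(t) = α has a unique solution t ∈ (0, n). -/

import Mathlib

/-!
Write `V(t) = vol 𝒯ₙ(t)` and `I(t) = ∫_{𝒯ₙ(t)} ∑ xᵢ`, so that `Pₙ = I / (n V)`. For `0 < a < b ≤ n`
the slab `𝒯ₙ(b) \ 𝒯ₙ(a)` has positive volume and carries `∑ xᵢ > a`, so
`I(b) - I(a) ≥ a (V(b) - V(a))`, while `I(a) < a V(a)`; together these give
`I(a) V(b) < I(b) V(a)`, i.e. `Pₙ(a) < Pₙ(b)`. A slab of width `h` has volume at most `h`, so `V`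
and `I` are Lipschitz and `Pₙ` is continuous on `(0, n]`. Finally `Pₙ(t) < t / n`, and
`Pₙ(n) = 1/2` by the symmetry `x ↦ 1 - x` of the cube, so the intermediate value theorem
produces the solution of `Pₙ(t) = α`.
-/

open MeasureTheory

/-- The truncated cube `𝒯_n(t) = {x ∈ [0,1]^n : ∑ i, x i ≤ t}`. -/
def truncCube (n : ℕ) (t : ℝ) : Set (Fin n → ℝ) :=
  {x | (∀ i, x i ∈ Set.Icc (0 : ℝ) 1) ∧ ∑ i, x i ≤ t}

/-- Volume of the truncated cube. -/
noncomputable def truncVol (n : ℕ) (t : ℝ) : ℝ :=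
  (volume (truncCube n t)).toReal

/-- Average first moment of the truncated cube. -/
noncomputable def truncMoment (n : ℕ) (t : ℝ) : ℝ :=
  (1 / (n * truncVol n t)) * ∫ x in truncCube n t, ∑ i, x i

open Set

lemma lipschitzWith_of_monotone_of_sub_le {f : ℝ → ℝ} {K : NNReal} (hf : Monotone f)
    (h : ∀ a b, a ≤ b → f b - f a ≤ K * (b - a)) : LipschitzWith K f := by
  refine LipschitzWith.of_le_add_mul K fun x y => ?_
  rcases le_total x y with hxy | hyx
  · exact (hf hxy).trans (le_add_of_nonneg_right (by positivity))
  · rw [Real.dist_eq, abs_of_nonneg (sub_nonneg.2 hyx)]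
    linarith [h y x hyx]

lemma setIntegral_le_mul_measureReal {X : Type*} [MeasurableSpace X] {μ : Measure X}
    {f : X → ℝ} {s : Set X} {c : ℝ} (hs : μ s ≠ ⊤) (hf : ∀ x ∈ s, f x ∈ Icc 0 c) :
    ∫ x in s, f x ∂μ ≤ c * μ.real s :=
  (Real.le_norm_self _).trans <| norm_setIntegral_le_of_norm_le_const hs.lt_top fun x hx => by
    rw [Real.norm_of_nonneg (hf x hx).1]
    exact (hf x hx).2

lemma volume_Icc_zero_one_pi (ι : Type*) [Fintype ι] : volume (Icc (0 : ι → ℝ) 1) = 1 := by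
  simp [Real.volume_Icc_pi]

section UnitCube

variable {ι : Type*} [Fintype ι]

lemma sum_nonneg_of_mem_Icc_zero_one {x : ι → ℝ} (hx : x ∈ Icc (0 : ι → ℝ) 1) :
    0 ≤ ∑ i, x i :=
  Finset.sum_nonneg fun i _ => hx.1 i

lemma sum_le_card_of_mem_Icc_zero_one {x : ι → ℝ} (hx : x ∈ Icc (0 : ι → ℝ) 1) :
    ∑ i, x i ≤ Fintype.card ι := by
  simpa using Finset.sum_le_sum fun i (_ : i ∈ Finset.univ) => hx.2 i

end UnitCube

section TruncCube

variable {n : ℕ} {a b t : ℝ}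

lemma truncCube_eq_inter (n : ℕ) (t : ℝ) :
    truncCube n t = Icc 0 1 ∩ {x | ∑ i, x i ≤ t} := by
  ext x
  simp only [truncCube, mem_inter_iff, ← pi_univ_Icc, mem_univ_pi, Pi.zero_apply, Pi.one_apply]
  rfl

lemma truncCube_subset_Icc (t : ℝ) : truncCube n t ⊆ Icc 0 1 := by
  rw [truncCube_eq_inter]
  exact inter_subset_left

lemma isCompact_truncCube (n : ℕ) (t : ℝ) : IsCompact (truncCube n t) := by
  rw [truncCube_eq_inter]
  exact isCompact_Icc.inter_right (isClosed_le (by fun_prop) continuous_const)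

lemma measurableSet_truncCube (n : ℕ) (t : ℝ) : MeasurableSet (truncCube n t) :=
  (isCompact_truncCube n t).isClosed.measurableSet

lemma volume_truncCube_ne_top (n : ℕ) (t : ℝ) : volume (truncCube n t) ≠ ⊤ :=
  (isCompact_truncCube n t).measure_ne_top

lemma truncCube_mono (n : ℕ) : Monotone (truncCube n) :=
  fun _ _ hst _ hx => ⟨hx.1, hx.2.trans hst⟩

lemma truncCube_natCast (n : ℕ) : truncCube n n = Icc 0 1 := by
  rw [truncCube_eq_inter, inter_eq_left]
  intro x hx
  simpa using sum_le_card_of_mem_Icc_zero_one hx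

lemma mem_truncCube_sdiff {x : Fin n → ℝ} :
    x ∈ truncCube n b \ truncCube n a ↔ x ∈ Icc 0 1 ∧ a < ∑ i, x i ∧ ∑ i, x i ≤ b := by
  simp only [truncCube_eq_inter, mem_sdiff, mem_inter_iff, mem_ofPred_eq, not_and, not_le]
  tauto

/-- The shear `x ↦ (x₁, …, xₘ, x₀ + x₁ + ⋯ + xₘ)` preserves volume and maps the slab into the
box `[0,1]ᵐ × (a, b]`. -/
lemma volume_truncCube_sdiff_le (hn : 0 < n) (a b : ℝ) :
    volume (truncCube n b \ truncCube n a) ≤ ENNReal.ofReal (b - a) := by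
  obtain ⟨m, rfl⟩ := Nat.exists_eq_add_one_of_ne_zero hn.ne'
  have hshear : MeasurePreserving (fun p : (Fin m → ℝ) × ℝ => (p.1, p.2 + ∑ i, p.1 i)) :=
    (MeasurePreserving.id volume).skew_product (g := fun (y : Fin m → ℝ) c => c + ∑ i, y i)
      (by fun_prop) (ae_of_all _ fun y => (measurePreserving_add_right volume _).map_eq)
  have hΨ := (hshear.comp Measure.measurePreserving_swap).comp
    (volume_preserving_piFinSuccAbove (fun _ : Fin (m + 1) => ℝ) 0)
  refine (measure_mono ?_).trans
    ((hΨ.measure_preimage_le (Icc (0 : Fin m → ℝ) 1 ×ˢ Ioc a b)).trans_eq ?_)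
  · intro x hx
    rw [mem_truncCube_sdiff, Fin.sum_univ_succ] at hx
    refine ⟨⟨fun i => hx.1.1 i.succ, fun i => hx.1.2 i.succ⟩, ?_⟩
    simpa [Fin.succAbove_zero, Fin.tail, add_comm (x 0)] using hx.2
  · rw [Measure.volume_eq_prod, Measure.prod_prod, volume_Icc_zero_one_pi, Real.volume_Ioc,
      one_mul]

lemma volume_truncCube_sdiff_pos (hn : 0 < n) (ha : 0 ≤ a) (hab : a < b) (hbn : b ≤ n) :
    0 < volume (truncCube n b \ truncCube n a) := by
  have hn' : (0 : ℝ) < n := Nat.cast_pos.2 hn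
  let U : Set (Fin n → ℝ) := univ.pi (fun _ => Ioo 0 1) ∩ (fun x => ∑ i, x i) ⁻¹' Ioo a b
  have hU : IsOpen U :=
    (isOpen_set_pi finite_univ fun _ _ => isOpen_Ioo).inter (isOpen_Ioo.preimage (by fun_prop))
  have hcenter : (fun _ => (a + b) / 2 / n) ∈ U := by
    refine ⟨fun _ _ => ⟨div_pos (by linarith) hn', (div_lt_one hn').2 (by linarith)⟩, ?_⟩
    simp only [mem_preimage, Finset.sum_const, Finset.card_univ, Fintype.card_fin, nsmul_eq_mul]
    rw [mul_div_cancel₀ _ hn'.ne']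
    constructor <;> linarith
  have hUsub : U ⊆ truncCube n b \ truncCube n a := fun x ⟨hx, hxab⟩ =>
    mem_truncCube_sdiff.2
      ⟨⟨fun i => (hx i (mem_univ i)).1.le, fun i => (hx i (mem_univ i)).2.le⟩, hxab.1, hxab.2.le⟩
  exact (hU.measure_pos volume ⟨_, hcenter⟩).trans_le (measure_mono hUsub)

lemma truncVol_sub_truncVol (hab : a ≤ b) :
    truncVol n b - truncVol n a = volume.real (truncCube n b \ truncCube n a) :=
  (measureReal_sdiff (truncCube_mono n hab) (measurableSet_truncCube n a)
    (volume_truncCube_ne_top n b)).symm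

lemma monotone_truncVol (n : ℕ) : Monotone (truncVol n) := fun _ b hab =>
  ENNReal.toReal_mono (volume_truncCube_ne_top n b) (measure_mono (truncCube_mono n hab))

lemma truncVol_sub_le (hn : 0 < n) (hab : a ≤ b) : truncVol n b - truncVol n a ≤ b - a := by
  rw [truncVol_sub_truncVol hab, measureReal_def]
  exact ENNReal.toReal_le_of_le_ofReal (sub_nonneg.2 hab) (volume_truncCube_sdiff_le hn a b)

lemma lipschitzWith_truncVol (hn : 0 < n) : LipschitzWith 1 (truncVol n) :=
  lipschitzWith_of_monotone_of_sub_le (monotone_truncVol n) fun _ _ hab => by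
    simpa using truncVol_sub_le hn hab

lemma strictMonoOn_truncVol (hn : 0 < n) : StrictMonoOn (truncVol n) (Icc 0 n) := by
  intro a ha b hb hab
  rw [← sub_pos, truncVol_sub_truncVol hab.le, measureReal_def]
  exact ENNReal.toReal_pos (volume_truncCube_sdiff_pos hn ha.1 hab hb.2).ne'
    (measure_ne_top_of_subset sdiff_subset (volume_truncCube_ne_top n b))

lemma truncVol_pos (hn : 0 < n) (ht : t ∈ Ioc 0 (n : ℝ)) : 0 < truncVol n t :=
  ENNReal.toReal_nonneg.trans_lt
    (strictMonoOn_truncVol hn ⟨le_rfl, Nat.cast_nonneg n⟩ ⟨ht.1.le, ht.2⟩ ht.1)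

lemma truncVol_natCast (n : ℕ) : truncVol n n = 1 := by
  simp [truncVol, truncCube_natCast, volume_Icc_zero_one_pi]

noncomputable def truncIntegral (n : ℕ) (t : ℝ) : ℝ :=
  ∫ x in truncCube n t, ∑ i, x i

lemma truncMoment_eq_div (n : ℕ) (t : ℝ) :
    truncMoment n t = truncIntegral n t / (n * truncVol n t) :=
  one_div_mul_eq_div _ _

lemma integrableOn_sum_truncCube (n : ℕ) (t : ℝ) :
    IntegrableOn (fun x : Fin n → ℝ => ∑ i, x i) (truncCube n t) :=
  (by fun_prop : Continuous fun x : Fin n → ℝ => ∑ i, x i).continuousOn.integrableOn_compact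
    (isCompact_truncCube n t)

lemma truncIntegral_sub_truncIntegral (hab : a ≤ b) :
    truncIntegral n b - truncIntegral n a = ∫ x in truncCube n b \ truncCube n a, ∑ i, x i :=
  (setIntegral_sdiff (measurableSet_truncCube n a) (integrableOn_sum_truncCube n b)
    (truncCube_mono n hab)).symm

lemma mul_truncVol_sub_le_truncIntegral_sub (hab : a ≤ b) :
    a * (truncVol n b - truncVol n a) ≤ truncIntegral n b - truncIntegral n a := by
  rw [truncIntegral_sub_truncIntegral hab, truncVol_sub_truncVol hab]
  exact setIntegral_ge_of_const_le_real
    ((measurableSet_truncCube n b).diff (measurableSet_truncCube n a))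
    (measure_ne_top_of_subset sdiff_subset (volume_truncCube_ne_top n b))
    (fun x hx => (mem_truncCube_sdiff.1 hx).2.1.le)
    ((integrableOn_sum_truncCube n b).mono_set sdiff_subset)

lemma truncIntegral_sub_le (hab : a ≤ b) :
    truncIntegral n b - truncIntegral n a ≤ min b n * (truncVol n b - truncVol n a) := by
  rw [truncIntegral_sub_truncIntegral hab, truncVol_sub_truncVol hab]
  refine setIntegral_le_mul_measureReal
    (measure_ne_top_of_subset sdiff_subset (volume_truncCube_ne_top n b)) fun x hx => ?_
  obtain ⟨hx, -, hxb⟩ := mem_truncCube_sdiff.1 hx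
  exact ⟨sum_nonneg_of_mem_Icc_zero_one hx,
    le_min hxb (by simpa using sum_le_card_of_mem_Icc_zero_one hx)⟩

lemma monotone_truncIntegral (n : ℕ) : Monotone (truncIntegral n) := fun a b hab => by
  rw [← sub_nonneg, truncIntegral_sub_truncIntegral hab]
  exact setIntegral_nonneg ((measurableSet_truncCube n b).diff (measurableSet_truncCube n a))
    fun x hx => sum_nonneg_of_mem_Icc_zero_one (mem_truncCube_sdiff.1 hx).1

lemma lipschitzWith_truncIntegral (hn : 0 < n) : LipschitzWith n (truncIntegral n) :=
  lipschitzWith_of_monotone_of_sub_le (monotone_truncIntegral n) fun a b hab => by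
    calc truncIntegral n b - truncIntegral n a
        ≤ min b n * (truncVol n b - truncVol n a) := truncIntegral_sub_le hab
      _ ≤ n * (b - a) := mul_le_mul (min_le_right _ _) (truncVol_sub_le hn hab)
          (sub_nonneg.2 (monotone_truncVol n hab)) (Nat.cast_nonneg n)
      _ = _ := by simp

lemma truncIntegral_le_mul_truncVol (n : ℕ) (t : ℝ) : truncIntegral n t ≤ t * truncVol n t :=
  setIntegral_le_mul_measureReal (volume_truncCube_ne_top n t) fun _ hx =>
    ⟨sum_nonneg_of_mem_Icc_zero_one (truncCube_subset_Icc t hx), hx.2⟩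

/-- On the slab `t/2 < ∑ xᵢ ≤ t` the integrand is at most `t`, on `𝒯ₙ(t/2)` at most `t/2`,
and `𝒯ₙ(t/2)` has positive volume. -/
lemma truncIntegral_lt_mul_truncVol (hn : 0 < n) (ht : t ∈ Ioc 0 (n : ℝ)) :
    truncIntegral n t < t * truncVol n t := by
  have hhalf : t / 2 ≤ t := by linarith [ht.1]
  have hslab : truncIntegral n t - truncIntegral n (t / 2) ≤
      t * (truncVol n t - truncVol n (t / 2)) :=
    (truncIntegral_sub_le hhalf).trans
      (mul_le_mul_of_nonneg_right (min_le_left _ _) (sub_nonneg.2 (monotone_truncVol n hhalf)))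
  have hpos : 0 < t / 2 * truncVol n (t / 2) :=
    mul_pos (half_pos ht.1) (truncVol_pos hn ⟨half_pos ht.1, hhalf.trans ht.2⟩)
  calc truncIntegral n t
      ≤ t / 2 * truncVol n (t / 2) + t * (truncVol n t - truncVol n (t / 2)) := by
        linarith [truncIntegral_le_mul_truncVol n (t / 2)]
    _ = t * truncVol n t - t / 2 * truncVol n (t / 2) := by ring
    _ < t * truncVol n t := sub_lt_self _ hpos

lemma truncIntegral_natCast (n : ℕ) : truncIntegral n n = n / 2 := by
  have hreflect : (fun x : Fin n → ℝ => 1 - x) ⁻¹' truncCube n n = truncCube n n := by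
    ext x
    simp only [truncCube_natCast, mem_preimage, mem_Icc, sub_nonneg, tsub_le_iff_right,
      le_add_iff_nonneg_right, and_comm]
  have hsymm := (Measure.measurePreserving_sub_left volume (1 : Fin n → ℝ)).setIntegral_preimage_emb
    (MeasurableEquiv.subLeft 1).measurableEmbedding (fun y => ∑ i, y i) (truncCube n n)
  rw [hreflect] at hsymm
  simp only [Pi.sub_apply, Pi.one_apply, Finset.sum_sub_distrib, Finset.sum_const,
    Finset.card_univ, Fintype.card_fin, nsmul_eq_mul, mul_one] at hsymm
  rw [integral_sub (integrableOn_const (C := (n : ℝ)) (volume_truncCube_ne_top n n))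
    (integrableOn_sum_truncCube n n), setIntegral_const, smul_eq_mul,
    show volume.real (truncCube n n) = 1 from truncVol_natCast n, one_mul] at hsymm
  rw [truncIntegral]
  linarith

lemma strictMonoOn_truncMoment (hn : 0 < n) : StrictMonoOn (truncMoment n) (Ioc 0 n) := by
  intro a ha b hb hab
  set I := truncIntegral n
  set V := truncVol n
  have hVa : 0 < V a := truncVol_pos hn ha
  have hVb : 0 < V b := truncVol_pos hn hb
  have hΔV : 0 < V b - V a :=
    sub_pos.2 (strictMonoOn_truncVol hn (Ioc_subset_Icc_self ha) (Ioc_subset_Icc_self hb) hab)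
  have hgap : I a < a * V a := truncIntegral_lt_mul_truncVol hn ha
  have hslab : a * (V b - V a) ≤ I b - I a := mul_truncVol_sub_le_truncIntegral_sub hab.le
  have hcross : I a * V b < I b * V a :=
    calc I a * V b = I a * V a + (V b - V a) * I a := by ring
      _ < I a * V a + (V b - V a) * (a * V a) := by gcongr
      _ = I a * V a + a * (V b - V a) * V a := by ring
      _ ≤ I a * V a + (I b - I a) * V a := by gcongr
      _ = I b * V a := by ring
  have hn' : (0 : ℝ) < n := Nat.cast_pos.2 hn
  rw [truncMoment_eq_div, truncMoment_eq_div, div_lt_div_iff₀ (by positivity) (by positivity)]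
  linarith [mul_lt_mul_of_pos_left hcross hn']

lemma truncMoment_lt_div (hn : 0 < n) (ht : t ∈ Ioc 0 (n : ℝ)) : truncMoment n t < t / n := by
  have hn' : (0 : ℝ) < n := Nat.cast_pos.2 hn
  have hV := truncVol_pos hn ht
  rw [truncMoment_eq_div, div_lt_div_iff₀ (by positivity) hn']
  linarith [mul_lt_mul_of_pos_right (truncIntegral_lt_mul_truncVol hn ht) hn']

lemma truncMoment_natCast (hn : 0 < n) : truncMoment n n = 1 / 2 := by
  have hn' : (n : ℝ) ≠ 0 := Nat.cast_ne_zero.2 hn.ne'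
  rw [truncMoment_eq_div, truncIntegral_natCast, truncVol_natCast]
  field_simp

lemma continuousOn_truncMoment (hn : 0 < n) : ContinuousOn (truncMoment n) (Ioc 0 n) := by
  rw [show truncMoment n = fun t => truncIntegral n t / (n * truncVol n t) from
    funext (truncMoment_eq_div n)]
  refine (lipschitzWith_truncIntegral hn).continuous.continuousOn.div
    (continuous_const.mul (lipschitzWith_truncVol hn).continuous).continuousOn fun t ht => ?_
  have := truncVol_pos hn ht
  have : (0 : ℝ) < n := Nat.cast_pos.2 hn
  positivity

lemma exists_truncMoment_eq {α : ℝ} (hn : 0 < n) (hα : α ∈ Ioo 0 (1 / 2)) :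
    ∃ t ∈ Ioo 0 (n : ℝ), truncMoment n t = α := by
  have hn' : (0 : ℝ) < n := Nat.cast_pos.2 hn
  have ht₀ : n * α ∈ Ioc 0 (n : ℝ) :=
    ⟨mul_pos hn' hα.1, mul_le_of_le_one_right hn'.le (by linarith [hα.2])⟩
  have hlow : truncMoment n (n * α) < α := by
    simpa [mul_div_cancel_left₀ α hn'.ne'] using truncMoment_lt_div hn ht₀
  have hhigh : α < truncMoment n n := (truncMoment_natCast hn).symm ▸ hα.2
  obtain ⟨t, ht, hPt⟩ := intermediate_value_Ioo ht₀.2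
    ((continuousOn_truncMoment hn).mono (Icc_subset_Ioc ht₀.1 le_rfl)) ⟨hlow, hhigh⟩
  exact ⟨t, ⟨ht₀.1.trans ht.1, ht.2⟩, hPt⟩

end TruncCube

theorem truncMoment_strictMono_and_unique_solution (n : ℕ) (hn : 0 < n) :
    StrictMonoOn (truncMoment n) (Set.Ioo (0 : ℝ) n) ∧
      ∀ α ∈ Set.Ioo (0 : ℝ) (1 / 2),
        ∃! t, t ∈ Set.Ioo (0 : ℝ) (n : ℝ) ∧ truncMoment n t = α := by
  have hmono := (strictMonoOn_truncMoment hn).mono Ioo_subset_Ioc_self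
  refine ⟨hmono, fun α hα => ?_⟩
  obtain ⟨t, ht, hPt⟩ := exists_truncMoment_eq hn hα
  exact ⟨t, ⟨ht, hPt⟩, fun s ⟨hs, hPs⟩ => hmono.injOn hs ht (hPs.trans hPt.symm)⟩
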